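/- Any stabilizing refinement sequence built from a set V of monotone propagators for T, starting from the same structure Ĩ, has a unique limit: if two stabilizing V-refinement sequences start from Ĩ, their last elements coincide. -/

import Mathlib

inductive Four : Type
  | t | f | u | i
deriving DecidableEq

namespace Four

/-- Belnap inverse -/
def inv : Four → Four
  | t => f
  | f => t
  | u => u
  | i => i

/-- precision order -/
def lep : Four → Four → Prop
  | u, _ => True
  | t, t => True
  | f, f => True
  | _, i => True
  | _, _ => False

/-- truth order -/
def leT : Four → Four → Prop
  | f, _ => True
  | _, t => True
  | u, u => True
  | i, i => True
  | _, _ => False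

/-- glb in the truth order -/
def meetT : Four → Four → Four
  | f, _ => f
  | _, f => f
  | t, y => y
  | x, t => x
  | u, u => u
  | i, i => i
  | u, i => f
  | i, u => f

/-- lub in the truth order -/
def joinT : Four → Four → Four
  | t, _ => t
  | _, t => t
  | f, y => y
  | x, f => x
  | u, u => u
  | i, i => i
  | u, i => t
  | i, u => t

/-- lub in the precision order -/
def joinP : Four → Four → Four
  | u, y => y
  | x, u => x
  | i, _ => i
  | _, i => i
  | t, t => t
  | f, f => f
  | t, f => i
  | f, t => i

open Classical in
/-- glb of a set in the truth order -/
noncomputable def sInfT (s : Set Four) : Four :=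
  if f ∈ s then f
  else if u ∈ s ∧ i ∈ s then f
  else if u ∈ s then u
  else if i ∈ s then i
  else t

open Classical in
/-- lub of a set in the truth order -/
noncomputable def sSupT (s : Set Four) : Four :=
  if t ∈ s then t
  else if u ∈ s ∧ i ∈ s then t
  else if u ∈ s then u
  else if i ∈ s then i
  else f

open Classical in
/-- glb of a set in the precision order -/
noncomputable def sInfP (s : Set Four) : Four :=
  if u ∈ s then u
  else if t ∈ s ∧ f ∈ s then u
  else if t ∈ s then t
  else if f ∈ s then f
  else i

open Classical in
/-- lub of a set in the precision order -/
noncomputable def sSupP (s : Set Four) : Four :=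
  if i ∈ s then i
  else if t ∈ s ∧ f ∈ s then i
  else if t ∈ s then t
  else if f ∈ s then f
  else u

end Four

open Classical in
/-- identification of a pair of classical truth values with a four-valued truth value:
(T,F) = t, (F,T) = f, (F,F) = u, (T,T) = i -/
noncomputable def pairFour (a b : Prop) : Four :=
  if a then (if b then Four.i else Four.t)
  else (if b then Four.f else Four.u)
/-- first-order formulas over a relational vocabulary, with variables of type `V`
(nested abstract syntax: a quantifier binds a fresh variable, `none`) -/
inductive Fml (P : Type) (ar : P → ℕ) : Type → Type 1
  | atom {V : Type} (p : P) (ts : Fin (ar p) → V) : Fml P ar V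
  | not {V : Type} (φ : Fml P ar V) : Fml P ar V
  | and {V : Type} (φ χ : Fml P ar V) : Fml P ar V
  | or {V : Type} (φ χ : Fml P ar V) : Fml P ar V
  | all {V : Type} (φ : Fml P ar (Option V)) : Fml P ar V
  | ex {V : Type} (φ : Fml P ar (Option V)) : Fml P ar V

/-- four-valued structures -/
abbrev Struc (P : Type) (ar : P → ℕ) (D : Type) : Type := (p : P) → (Fin (ar p) → D) → Four
/-- two-valued (classical) structures -/
abbrev Struc2 (P : Type) (ar : P → ℕ) (D : Type) : Type := (p : P) → (Fin (ar p) → D) → Prop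

variable {P D : Type} {ar : P → ℕ}

/-- four-valued evaluation: ¬ is Belnap inverse, ∧/∀ glb in the truth order,
∨/∃ lub in the truth order -/
noncomputable def eval (Iv : Struc P ar D) : {V : Type} → (V → D) → Fml P ar V → Four
  | _, θ, .atom p ts => Iv p fun k => θ (ts k)
  | _, θ, .not φ => (eval Iv θ φ).inv
  | _, θ, .and φ χ => Four.meetT (eval Iv θ φ) (eval Iv θ χ)
  | _, θ, .or φ χ => Four.joinT (eval Iv θ φ) (eval Iv θ χ)
  | _, θ, .all φ => Four.sInfT {v | ∃ d : D, v = eval Iv (fun o => Option.elim o d θ) φ}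
  | _, θ, .ex φ => Four.sSupT {v | ∃ d : D, v = eval Iv (fun o => Option.elim o d θ) φ}

/-- classical two-valued satisfaction -/
def sat (Iv : Struc2 P ar D) : {V : Type} → (V → D) → Fml P ar V → Prop
  | _, θ, .atom p ts => Iv p fun k => θ (ts k)
  | _, θ, .not φ => ¬ sat Iv θ φ
  | _, θ, .and φ χ => sat Iv θ φ ∧ sat Iv θ χ
  | _, θ, .or φ χ => sat Iv θ φ ∨ sat Iv θ χ
  | _, θ, .all φ => ∀ d : D, sat Iv (fun o => Option.elim o d θ) φ
  | _, θ, .ex φ => ∃ d : D, sat Iv (fun o => Option.elim o d θ) φ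

/-- a formula contains no occurrence of negation -/
def negFree : {V : Type} → Fml P ar V → Prop
  | _, .atom _ _ => True
  | _, .not _ => False
  | _, .and φ χ => negFree φ ∧ negFree χ
  | _, .or φ χ => negFree φ ∧ negFree χ
  | _, .all φ => negFree φ
  | _, .ex φ => negFree φ

/-- the simultaneous ct/cf transformation; the first component is ctφ, the second cfφ;
the vocabulary `P ⊕ P` has `ctP = Sum.inl P` and `cfP = Sum.inr P` -/
def ctf : {V : Type} → Fml P ar V →
    Fml (P ⊕ P) (Sum.elim ar ar) V × Fml (P ⊕ P) (Sum.elim ar ar) V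
  | _, .atom p ts => (.atom (.inl p) ts, .atom (.inr p) ts)
  | _, .not φ => ((ctf φ).2, (ctf φ).1)
  | _, .and φ χ => (.and (ctf φ).1 (ctf χ).1, .or (ctf φ).2 (ctf χ).2)
  | _, .or φ χ => (.or (ctf φ).1 (ctf χ).1, .and (ctf φ).2 (ctf χ).2)
  | _, .all φ => (.all (ctf φ).1, .ex (ctf φ).2)
  | _, .ex φ => (.ex (ctf φ).1, .all (ctf φ).2)

/-- the two-valued encoding of a four-valued structure -/
def enc (Iv : Struc P ar D) : Struc2 (P ⊕ P) (Sum.elim ar ar) D :=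
  fun q => match q with
  | .inl p => fun ds => Four.lep .t (Iv p ds)
  | .inr p => fun ds => Four.lep .f (Iv p ds)

/-- pointwise precision order on structures -/
def slep (I J : Struc P ar D) : Prop := ∀ p ds, (I p ds).lep (J p ds)

/-- pointwise truth order on four-valued structures -/
def sleT (I J : Struc P ar D) : Prop := ∀ p ds, (I p ds).leT (J p ds)

/-- a four-valued structure is two-valued -/
def twoVal (I : Struc P ar D) : Prop := ∀ p ds, I p ds = Four.t ∨ I p ds = Four.f

/-- `M` is a model of the theory `T` (a set of sentences) -/
def models (M : Struc P ar D) (T : Set (Fml P ar Empty)) : Prop :=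
  ∀ φ ∈ T, eval M (fun x => x.elim) φ = Four.t

/-- `O` is a propagator for `T`: inflationary in the precision order, and every
two-valued model of `T` above the input stays above the output -/
def IsPropagator (T : Set (Fml P ar Empty)) (O : Struc P ar D → Struc P ar D) : Prop :=
  (∀ I, slep I (O I)) ∧
  ∀ I M, twoVal M → models M T → slep I M → slep (O I) M

/-- pointwise lub (in the precision order) of a set of four-valued structures -/
noncomputable def sSupStruc {P D : Type} {ar : P → ℕ} (S : Set (Struc P ar D)) :
    Struc P ar D :=
  fun p ds => Four.sSupP {v | ∃ I ∈ S, v = I p ds}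

/-- a (possibly transfinite) V-refinement sequence from I of length α -/
def IsRefSeq {P D : Type} {ar : P → ℕ} (V : Set (Struc P ar D → Struc P ar D))
    (I : Struc P ar D) (α : Ordinal) (J : Ordinal → Struc P ar D) : Prop :=
  J 0 = I ∧
  (∀ ξ : Ordinal, ξ < α → ∃ O ∈ V, J (ξ + 1) = O (J ξ)) ∧
  (∀ ξ : Ordinal, ξ < α → slep (J ξ) (J (ξ + 1)) ∧ J ξ ≠ J (ξ + 1)) ∧
  (∀ lam : Ordinal, Order.IsSuccLimit lam → lam ≤ α →
    J lam = sSupStruc {K | ∃ ξ : Ordinal, ξ < lam ∧ K = J ξ})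

/-
The last element of a stabilizing sequence is a common fixpoint of all `O ∈ V`
lying above `Ĩ`. By transfinite induction, using monotonicity at successor steps and the
least-upper-bound property at limits, every element of any `V`-refinement sequence from `Ĩ`
stays below such a fixpoint. Hence the two last elements lie below each other.
-/

namespace Four

theorem lep_refl (a : Four) : a.lep a := by
  cases a <;> trivial

theorem lep_trans {a b c : Four} (hab : a.lep b) (hbc : b.lep c) : a.lep c := by
  cases a <;> cases b <;> cases c <;> trivial

theorem lep_antisymm {a b : Four} (hab : a.lep b) (hba : b.lep a) : a = b := by
  cases a <;> cases b <;> trivial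

theorem lep_sSupP {s : Set Four} {v : Four} (hv : v ∈ s) : v.lep (sSupP s) := by
  unfold sSupP
  split_ifs with hi htf ht hf <;> cases v <;>
    first | trivial | exact absurd hv ‹_› | exact absurd ⟨ht, hv⟩ htf

theorem sSupP_lep {s : Set Four} {a : Four} (h : ∀ v ∈ s, v.lep a) : (sSupP s).lep a := by
  unfold sSupP
  split_ifs with hi htf ht hf
  · exact h _ hi
  · have := h _ htf.1
    have := h _ htf.2
    cases a <;> trivial
  · exact h _ ht
  · exact h _ hf
  · trivial

end Four

theorem slep_refl (I : Struc P ar D) : slep I I :=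
  fun _ _ => Four.lep_refl _

theorem slep_trans {I J K : Struc P ar D} (hIJ : slep I J) (hJK : slep J K) : slep I K :=
  fun p ds => Four.lep_trans (hIJ p ds) (hJK p ds)

theorem slep_antisymm {I J : Struc P ar D} (hIJ : slep I J) (hJI : slep J I) : I = J :=
  funext fun p => funext fun ds => Four.lep_antisymm (hIJ p ds) (hJI p ds)

theorem slep_sSupStruc {S : Set (Struc P ar D)} {I : Struc P ar D} (hI : I ∈ S) :
    slep I (sSupStruc S) :=
  fun _ _ => Four.lep_sSupP ⟨I, hI, rfl⟩

theorem sSupStruc_slep {S : Set (Struc P ar D)} {L : Struc P ar D}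
    (h : ∀ I ∈ S, slep I L) : slep (sSupStruc S) L :=
  fun p ds => Four.sSupP_lep fun _ ⟨I, hI, hv⟩ => hv ▸ h I hI p ds

namespace IsRefSeq

variable {V : Set (Struc P ar D → Struc P ar D)} {I : Struc P ar D} {α : Ordinal}
  {J : Ordinal → Struc P ar D}

theorem start_slep (hJ : IsRefSeq V I α J) : ∀ ξ ≤ α, slep I (J ξ) := by
  obtain ⟨hzero, -, hstep, hlimit⟩ := hJ
  intro ξ
  induction ξ using Ordinal.limitRecOn with
  | zero => exact fun _ => hzero ▸ slep_refl I
  | add_one ξ ih =>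
    intro hξ
    have hξα : ξ < α := Order.add_one_le_iff.mp hξ
    exact slep_trans (ih hξα.le) (hstep ξ hξα).1
  | limit ξ hξ ih =>
    intro hξα
    have hpos : 0 < ξ := hξ.bot_lt
    rw [hlimit ξ hξ hξα]
    exact slep_trans (ih 0 hpos (hpos.le.trans hξα)) (slep_sSupStruc ⟨0, hpos, rfl⟩)

theorem slep_of_prefixed (hmono : ∀ O ∈ V, ∀ I J, slep I J → slep (O I) (O J))
    (hJ : IsRefSeq V I α J) {L : Struc P ar D} (hIL : slep I L)
    (hL : ∀ O ∈ V, slep (O L) L) : ∀ ξ ≤ α, slep (J ξ) L := by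
  obtain ⟨hzero, hsucc, -, hlimit⟩ := hJ
  intro ξ
  induction ξ using Ordinal.limitRecOn with
  | zero => exact fun _ => hzero ▸ hIL
  | add_one ξ ih =>
    intro hξ
    have hξα : ξ < α := Order.add_one_le_iff.mp hξ
    obtain ⟨O, hO, hJO⟩ := hsucc ξ hξα
    rw [hJO]
    exact slep_trans (hmono O hO _ _ (ih hξα.le)) (hL O hO)
  | limit ξ hξ ih =>
    intro hξα
    rw [hlimit ξ hξ hξα]
    exact sSupStruc_slep fun _ ⟨η, hη, hK⟩ => hK ▸ ih η hη (hη.le.trans hξα)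

theorem slep_of_stabilizing (hmono : ∀ O ∈ V, ∀ I J, slep I J → slep (O I) (O J))
    (hJ : IsRefSeq V I α J) {β : Ordinal} {K : Ordinal → Struc P ar D}
    (hK : IsRefSeq V I β K) (hKstab : ∀ O ∈ V, O (K β) = K β) : slep (J α) (K β) :=
  hJ.slep_of_prefixed hmono (hK.start_slep β le_rfl)
    (fun O hO => (hKstab O hO).symm ▸ slep_refl _) α le_rfl

end IsRefSeq

theorem stabilizing_refinement_sequences_same_limit_general {P D : Type} {ar : P → ℕ}
    (V : Set (Struc P ar D → Struc P ar D))
    (hmono : ∀ O ∈ V, ∀ I J, slep I J → slep (O I) (O J))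
    (I : Struc P ar D) (α β : Ordinal)
    (J K : Ordinal → Struc P ar D)
    (hJ : IsRefSeq V I α J) (hK : IsRefSeq V I β K)
    (hJstab : ∀ O ∈ V, O (J α) = J α) (hKstab : ∀ O ∈ V, O (K β) = K β) :
    J α = K β :=
  slep_antisymm (hJ.slep_of_stabilizing hmono hK hKstab) (hK.slep_of_stabilizing hmono hJ hJstab)

/-- Any two stabilizing refinement sequences built from a set of monotone propagators
for T, starting from the same structure, have the same limit. -/
theorem stabilizing_refinement_sequences_same_limit {P D : Type} {ar : P → ℕ}
    (T : Set (Fml P ar Empty)) (V : Set (Struc P ar D → Struc P ar D))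
    (hprop : ∀ O ∈ V, IsPropagator T O)
    (hmono : ∀ O ∈ V, ∀ I J, slep I J → slep (O I) (O J))
    (I : Struc P ar D) (α β : Ordinal)
    (J K : Ordinal → Struc P ar D)
    (hJ : IsRefSeq V I α J) (hK : IsRefSeq V I β K)
    (hJstab : ∀ O ∈ V, O (J α) = J α) (hKstab : ∀ O ∈ V, O (K β) = K β) :
    J α = K β :=
  stabilizing_refinement_sequences_same_limit_general V hmono I α β J K hJ hK hJstab hKstab
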